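/- The weighted Myerson value is the unique allocation rule on networks with component additive value functions that is Component Balanced and satisfies Weighted Bargaining Power: if Y is an allocation rule satisfying, for fixed positive weights w, (1) Σ_{i∈N(h)} Y_i(g,v) = v(h) for every component h of every network g, and (2) w_j[Y_i(g,v)−Y_i(g−ij,v)] = w_i[Y_j(g,v)−Y_j(g−ij,v)] for all links ij ∈ g, then Y = Y^{w-MV}. -/

import Mathlib

open Finset

variable {n : ℕ}

/-- A network on player set `Fin n`: a finite set of (unordered) links. -/
abbrev Network (n : ℕ) := Finset (Sym2 (Fin n))

/-- The set of non-isolated players of a network. -/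
def players (g : Network n) : Finset (Fin n) :=
  Finset.univ.filter (fun i => ∃ e ∈ g, i ∈ e)

/-- Harsanyi dividend of a value function at a network. -/
noncomputable def dividend (v : Network n → ℝ) (g' : Network n) : ℝ :=
  ∑ g'' ∈ g'.powerset, (-1 : ℝ) ^ (g'.card - g''.card) * v g''

/-- The weighted Myerson value. -/
noncomputable def wMV (w : Fin n → ℝ) (v : Network n → ℝ) (g : Network n) (i : Fin n) : ℝ :=
  ∑ g' ∈ g.powerset.filter (fun g' => i ∈ players g'),
    (w i / ∑ j ∈ players g', w j) * dividend v g'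

/-- Connectivity of two players through links of `g`. -/
def connectedIn (g : Network n) (i j : Fin n) : Prop :=
  Relation.ReflTransGen (fun a b => s(a, b) ∈ g) i j

open Classical in
/-- The component of `g` containing the link `e`. -/
noncomputable def component (g : Network n) (e : Sym2 (Fin n)) : Network n :=
  g.filter (fun e' => ∃ i ∈ e, ∃ j ∈ e', connectedIn g i j)

/-- The set of components (maximal connected subnetworks) of `g`. -/
noncomputable def components (g : Network n) : Finset (Network n) :=
  g.image (component g)

/-- Component additive value functions. -/
def componentAdditive (v : Network n → ℝ) : Prop :=
  ∀ g : Network n, v g = ∑ h ∈ components g, v h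

open Classical in
/-- The restriction `g|_S` of a network to a coalition `S`. -/
noncomputable def restrict (g : Network n) (S : Finset (Fin n)) : Network n :=
  g.filter (fun e => ∀ i ∈ e, i ∈ S)

/-- The set `g_i` of links of player `i` in `g`. -/
def glinks (g : Network n) (i : Fin n) : Network n :=
  g.filter (fun e => i ∈ e)

-- basic lemmas
lemma mem_players {g : Network n} {i : Fin n} : i ∈ players g ↔ ∃ e ∈ g, i ∈ e := by
  simp [players]

lemma players_mono {g g' : Network n} (h : g' ⊆ g) : players g' ⊆ players g := by
  intro i hi
  rw [mem_players] at *
  obtain ⟨e, he, hie⟩ := hi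
  exact ⟨e, h he, hie⟩

lemma sym2_exists_mem (e : Sym2 (Fin n)) : ∃ i, i ∈ e := by
  induction e using Sym2.ind with
  | _ a b => exact ⟨a, Sym2.mem_mk_left a b⟩

lemma connectedIn_of_mem {g : Network n} {e : Sym2 (Fin n)} (he : e ∈ g) {a b : Fin n}
    (ha : a ∈ e) (hb : b ∈ e) : connectedIn g a b := by
  by_cases hab : a = b
  · subst hab; exact Relation.ReflTransGen.refl
  · have : s(a, b) = e := by
      induction e using Sym2.ind with
      | _ x y =>
        rw [Sym2.mem_iff] at ha hb
        rcases ha with rfl | rfl <;> rcases hb with rfl | rfl <;>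
          first | exact absurd rfl hab | rfl | exact Sym2.eq_swap
    exact Relation.ReflTransGen.single (this ▸ he)

lemma connectedIn_symm {g : Network n} : Symmetric (connectedIn g) :=
  fun a b hab => (haveI : Std.Symm (fun a b : Fin n => s(a, b) ∈ g) :=
    ⟨fun a b h => by rwa [Sym2.eq_swap] at h⟩; Relation.ReflTransGen.symmetric).symm a b hab

lemma connectedIn_mono {g g' : Network n} (h : g' ⊆ g) {a b : Fin n}
    (hc : connectedIn g' a b) : connectedIn g a b :=
  Relation.ReflTransGen.mono (fun x y hxy => h hxy) _ _ hc

lemma component_subset (g : Network n) (e : Sym2 (Fin n)) : component g e ⊆ g := by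
  classical
  rw [component]; exact filter_subset _ _

lemma mem_component_self {g : Network n} {e : Sym2 (Fin n)} (he : e ∈ g) :
    e ∈ component g e := by
  classical
  obtain ⟨i, hi⟩ := sym2_exists_mem e
  rw [component, mem_filter]
  exact ⟨he, i, hi, i, hi, Relation.ReflTransGen.refl⟩

lemma components_subset {g h : Network n} (hh : h ∈ components g) : h ⊆ g := by
  rw [components, mem_image] at hh
  obtain ⟨e, _, rfl⟩ := hh
  exact component_subset g e

/-- Separation: an edge of `g` with an endpoint among the players of a component
of `g` belongs to that component. -/
lemma mem_comp_of_endpoint {g h : Network n} (hh : h ∈ components g) {e : Sym2 (Fin n)}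
    (he : e ∈ g) {i : Fin n} (hie : i ∈ e) (hip : i ∈ players h) : e ∈ h := by
  classical
  rw [components, mem_image] at hh
  obtain ⟨e0, he0, rfl⟩ := hh
  rw [mem_players] at hip
  obtain ⟨e'', he'', hie''⟩ := hip
  rw [component, mem_filter] at he'' ⊢
  obtain ⟨he''g, a, ha, b, hb, hab⟩ := he''
  refine ⟨he, a, ha, i, hie, hab.trans (connectedIn_of_mem he''g hb hie'')⟩

/-- Endpoints of edges not in the component `h` are not players of `h`. -/
lemma not_player_of_not_mem_comp {g h : Network n} (hh : h ∈ components g)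
    {e : Sym2 (Fin n)} (he : e ∈ g) (heh : e ∉ h) {i : Fin n} (hie : i ∈ e) :
    i ∉ players h := fun hip => heh (mem_comp_of_endpoint hh he hie hip)

/-- Paths in `a ∪ b` starting inside `players h` stay inside and use only `a`,
when `a ⊆ h` and `b` avoids `h`. -/
lemma path_invariant_in {g h : Network n} (hh : h ∈ components g)
    {a b : Network n} (hab : a ⊆ h) (hbg : b ⊆ g) (hbh : ∀ e ∈ b, e ∉ h)
    {x y : Fin n} (hc : connectedIn (a ∪ b) x y) (hx : x ∈ players h) :
    connectedIn a x y ∧ y ∈ players h := by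
  induction hc with
  | refl => exact ⟨Relation.ReflTransGen.refl, hx⟩
  | tail hxz hzy ih =>
    rename_i z y
    obtain ⟨hca, hz⟩ := ih
    rcases mem_union.1 hzy with hA | hB
    · refine ⟨hca.tail hA, ?_⟩
      have : s(z, y) ∈ h := hab hA
      exact mem_players.2 ⟨_, this, Sym2.mem_mk_right z y⟩
    · exact absurd hz (not_player_of_not_mem_comp hh (hbg hB) (hbh _ hB) (Sym2.mem_mk_left z y))

/-- Paths in `a ∪ b` starting outside `players h` stay outside and use only `b`. -/
lemma path_invariant_out {g h : Network n} (hh : h ∈ components g)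
    {a b : Network n} (hab : a ⊆ h) (hbg : b ⊆ g) (hbh : ∀ e ∈ b, e ∉ h)
    {x y : Fin n} (hc : connectedIn (a ∪ b) x y) (hx : x ∉ players h) :
    connectedIn b x y ∧ y ∉ players h := by
  induction hc with
  | refl => exact ⟨Relation.ReflTransGen.refl, hx⟩
  | tail hxz hzy ih =>
    rename_i z y
    obtain ⟨hcb, hz⟩ := ih
    rcases mem_union.1 hzy with hA | hB
    · exact absurd (mem_players.2 ⟨_, hab hA, Sym2.mem_mk_left z y⟩) hz
    · exact ⟨hcb.tail hB, not_player_of_not_mem_comp hh (hbg hB) (hbh _ hB)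
        (Sym2.mem_mk_right z y)⟩

lemma edge_players_in {h : Network n} {e : Sym2 (Fin n)} (he : e ∈ h) {i : Fin n}
    (hie : i ∈ e) : i ∈ players h := mem_players.2 ⟨e, he, hie⟩

/-- Components of a separated union split. -/
lemma component_union_left {g h : Network n} (hh : h ∈ components g)
    {a b : Network n} (hab : a ⊆ h) (hbg : b ⊆ g) (hbh : ∀ e ∈ b, e ∉ h)
    {e : Sym2 (Fin n)} (he : e ∈ a) : component (a ∪ b) e = component a e := by
  classical
  ext e'
  rw [component, component, mem_filter, mem_filter]
  constructor
  · rintro ⟨he', i, hi, j, hj, hc⟩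
    have hip : i ∈ players h := edge_players_in (hab he) hi
    obtain ⟨hca, hjp⟩ := path_invariant_in hh hab hbg hbh hc hip
    rcases mem_union.1 he' with hA | hB
    · exact ⟨hA, i, hi, j, hj, hca⟩
    · exact absurd hjp (not_player_of_not_mem_comp hh (hbg hB) (hbh _ hB) hj)
  · rintro ⟨he', i, hi, j, hj, hc⟩
    exact ⟨mem_union_left _ he', i, hi, j, hj, connectedIn_mono subset_union_left hc⟩

lemma component_union_right {g h : Network n} (hh : h ∈ components g)
    {a b : Network n} (hab : a ⊆ h) (hbg : b ⊆ g) (hbh : ∀ e ∈ b, e ∉ h)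
    {e : Sym2 (Fin n)} (he : e ∈ b) : component (a ∪ b) e = component b e := by
  classical
  ext e'
  rw [component, component, mem_filter, mem_filter]
  constructor
  · rintro ⟨he', i, hi, j, hj, hc⟩
    have hip : i ∉ players h := not_player_of_not_mem_comp hh (hbg he) (hbh _ he) hi
    obtain ⟨hcb, hjp⟩ := path_invariant_out hh hab hbg hbh hc hip
    rcases mem_union.1 he' with hA | hB
    · exact absurd (edge_players_in (hab hA) hj) hjp
    · exact ⟨hB, i, hi, j, hj, hcb⟩
  · rintro ⟨he', i, hi, j, hj, hc⟩
    exact ⟨mem_union_right _ he', i, hi, j, hj, connectedIn_mono subset_union_right hc⟩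

/-- Additivity of a component additive value over separated unions. -/
lemma value_add {v : Network n → ℝ} (hv : componentAdditive v) {g h : Network n}
    (hh : h ∈ components g) {a b : Network n} (hab : a ⊆ h) (hbg : b ⊆ g)
    (hbh : ∀ e ∈ b, e ∉ h) : v (a ∪ b) = v a + v b := by
  classical
  have hcomp : components (a ∪ b) = components a ∪ components b := by
    rw [components, image_union]
    congr 1
    · exact image_congr (fun e he => component_union_left hh hab hbg hbh he)
    · exact image_congr (fun e he => component_union_right hh hab hbg hbh he)
  have hdisj : Disjoint (components a) (components b) := by
    rw [disjoint_left]
    intro c hca hcb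
    rw [components, mem_image] at hca hcb
    obtain ⟨e, he, rfl⟩ := hca
    obtain ⟨e', he', hce⟩ := hcb
    have h1 : e ∈ component a e := mem_component_self he
    have h2 : e ∈ b := component_subset b e' (hce ▸ h1)
    exact hbh e h2 (hab he)
  rw [hv (a ∪ b), hcomp, sum_union hdisj, ← hv a, ← hv b]

lemma value_empty {v : Network n → ℝ} (hv : componentAdditive v) : v ∅ = 0 := by
  rw [hv ∅]
  simp [components]

lemma sum_powerset_disjUnion {α β : Type*} [DecidableEq α] [AddCommMonoid β]
    {a b : Finset α} (hd : Disjoint a b) (f : Finset α → β) :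
    ∑ s ∈ (a ∪ b).powerset, f s = ∑ p ∈ a.powerset, ∑ q ∈ b.powerset, f (p ∪ q) := by
  rw [← sum_product']
  refine Eq.symm (sum_nbij' (fun pq => pq.1 ∪ pq.2) (fun s => (s ∩ a, s ∩ b)) ?_ ?_ ?_ ?_ ?_)
  · intro pq hpq
    rw [mem_product, mem_powerset, mem_powerset] at hpq
    rw [mem_powerset]
    exact union_subset_union hpq.1 hpq.2
  · intro s hs
    rw [mem_powerset] at hs
    rw [mem_product, mem_powerset, mem_powerset]
    exact ⟨inter_subset_right, inter_subset_right⟩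
  · intro pq hpq
    rw [mem_product, mem_powerset, mem_powerset] at hpq
    have h1 : (pq.1 ∪ pq.2) ∩ a = pq.1 := by
      ext x
      simp only [mem_inter, mem_union]
      constructor
      · rintro ⟨hx | hx, hxa⟩
        · exact hx
        · exact absurd hxa (disjoint_right.1 hd (hpq.2 hx))
      · intro hx
        exact ⟨Or.inl hx, hpq.1 hx⟩
    have h2 : (pq.1 ∪ pq.2) ∩ b = pq.2 := by
      ext x
      simp only [mem_inter, mem_union]
      constructor
      · rintro ⟨hx | hx, hxb⟩
        · exact absurd hxb (disjoint_left.1 hd (hpq.1 hx))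
        · exact hx
      · intro hx
        exact ⟨Or.inr hx, hpq.2 hx⟩
    show ((pq.1 ∪ pq.2) ∩ a, (pq.1 ∪ pq.2) ∩ b) = pq
    rw [h1, h2]
  · intro s hs
    rw [mem_powerset] at hs
    show s ∩ a ∪ s ∩ b = s
    rw [← inter_union_distrib_left]
    exact (inter_eq_left.2 hs)
  · intro pq hpq
    rfl

lemma sum_powerset_sign_real {α : Type*} [DecidableEq α] {x : Finset α} (hx : x.Nonempty) :
    ∑ m ∈ x.powerset, (-1 : ℝ) ^ (x.card - m.card) = 0 := by
  have key : ∀ m ∈ x.powerset, (-1 : ℝ) ^ (x.card - m.card)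
      = (-1 : ℝ) ^ x.card * (-1 : ℝ) ^ m.card := by
    intro m hm
    rw [mem_powerset] at hm
    have hc : m.card ≤ x.card := card_le_card hm
    have : (-1 : ℝ) ^ (x.card - m.card) * (-1 : ℝ) ^ m.card = (-1 : ℝ) ^ x.card := by
      rw [← pow_add, Nat.sub_add_cancel hc]
    calc (-1 : ℝ) ^ (x.card - m.card)
        = (-1 : ℝ) ^ (x.card - m.card) * ((-1 : ℝ) ^ m.card * (-1 : ℝ) ^ m.card) := by
          rw [← pow_add, Even.neg_one_pow ⟨m.card, rfl⟩, mul_one]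
      _ = (-1 : ℝ) ^ x.card * (-1 : ℝ) ^ m.card := by rw [← mul_assoc, this]
  rw [sum_congr rfl key, ← mul_sum]
  have : ∑ m ∈ x.powerset, (-1 : ℝ) ^ m.card
      = ((∑ m ∈ x.powerset, (-1 : ℤ) ^ m.card : ℤ) : ℝ) := by push_cast; rfl
  rw [this, Finset.sum_powerset_neg_one_pow_card_of_nonempty hx]
  simp

/-- Dividends of component additive value functions vanish on networks split
by a component of `g`. -/
lemma dividend_eq_zero {v : Network n → ℝ} (hv : componentAdditive v) {g h : Network n}
    (hh : h ∈ components g) {g' : Network n} (hg' : g' ⊆ g)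
    (ha : (g' ∩ h).Nonempty) (hb : (g' \ h).Nonempty) : dividend v g' = 0 := by
  classical
  set a := g' ∩ h with hadef
  set b := g' \ h with hbdef
  have hab : Disjoint a b := (disjoint_sdiff_inter g' h).symm
  have hunion : a ∪ b = g' := by
    rw [hadef, hbdef, union_comm, sdiff_union_inter]
  have key : ∀ p ∈ a.powerset, ∀ q ∈ b.powerset,
      (-1 : ℝ) ^ ((a ∪ b).card - (p ∪ q).card) * v (p ∪ q)
      = (-1 : ℝ) ^ (a.card - p.card) * v p * (-1 : ℝ) ^ (b.card - q.card)
        + (-1 : ℝ) ^ (a.card - p.card) * ((-1 : ℝ) ^ (b.card - q.card) * v q) := by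
    intro p hp q hq
    rw [mem_powerset] at hp hq
    have hpq : Disjoint p q := hab.mono hp hq
    have hcard : (a ∪ b).card - (p ∪ q).card = (a.card - p.card) + (b.card - q.card) := by
      rw [card_union_of_disjoint hab, card_union_of_disjoint hpq]
      have h1 := card_le_card hp
      have h2 := card_le_card hq
      omega
    have hqb : ∀ e ∈ q, e ∉ h := fun e he => (mem_sdiff.1 (hq he)).2
    have hv' : v (p ∪ q) = v p + v q :=
      value_add hv hh (hp.trans inter_subset_right)
        (hq.trans (sdiff_subset.trans hg')) hqb
    rw [hcard, pow_add, hv']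
    ring
  have hsb : ∑ q ∈ b.powerset, (-1 : ℝ) ^ (b.card - q.card) = 0 :=
    sum_powerset_sign_real hb
  have hsa : ∑ p ∈ a.powerset, (-1 : ℝ) ^ (a.card - p.card) = 0 :=
    sum_powerset_sign_real ha
  rw [dividend, ← hunion, sum_powerset_disjUnion hab _]
  rw [sum_congr rfl (fun p hp => sum_congr rfl (fun q hq => key p hp q hq))]
  have inner : ∀ p ∈ a.powerset,
      (∑ q ∈ b.powerset,
        ((-1 : ℝ) ^ (a.card - p.card) * v p * (-1 : ℝ) ^ (b.card - q.card)
          + (-1 : ℝ) ^ (a.card - p.card) * ((-1 : ℝ) ^ (b.card - q.card) * v q)))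
      = (-1 : ℝ) ^ (a.card - p.card)
          * ∑ q ∈ b.powerset, (-1 : ℝ) ^ (b.card - q.card) * v q := by
    intro p hp
    rw [sum_add_distrib, ← mul_sum, ← mul_sum, hsb, mul_zero, zero_add]
  rw [sum_congr rfl inner, ← sum_mul, hsa, zero_mul]

lemma sum_powerset_sign_real' {α : Type*} [DecidableEq α] (x : Finset α) :
    ∑ m ∈ x.powerset, (-1 : ℝ) ^ m.card = if x = ∅ then 1 else 0 := by
  have : ∑ m ∈ x.powerset, (-1 : ℝ) ^ m.card
      = ((∑ m ∈ x.powerset, (-1 : ℤ) ^ m.card : ℤ) : ℝ) := by push_cast; rfl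
  rw [this, Finset.sum_powerset_neg_one_pow_card]
  split <;> simp

/-- Möbius inversion: summing dividends over subnetworks recovers the value. -/
lemma sum_dividend_powerset (v : Network n → ℝ) (h : Network n) :
    ∑ g' ∈ h.powerset, dividend v g' = v h := by
  classical
  have swap : ∑ g' ∈ h.powerset, dividend v g'
      = ∑ g'' ∈ h.powerset, ∑ g' ∈ h.powerset.filter (fun g' => g'' ⊆ g'),
          (-1 : ℝ) ^ (g'.card - g''.card) * v g'' := by
    simp only [dividend]
    refine sum_comm' ?_
    intro g' g''
    simp only [mem_powerset, mem_filter]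
    constructor
    · rintro ⟨h1, h2⟩
      exact ⟨⟨h1, h2⟩, h2.trans h1⟩
    · rintro ⟨⟨h1, h2⟩, _⟩
      exact ⟨h1, h2⟩
  rw [swap]
  have inner : ∀ g'' ∈ h.powerset,
      ∑ g' ∈ h.powerset.filter (fun g' => g'' ⊆ g'),
        (-1 : ℝ) ^ (g'.card - g''.card) * v g''
      = (if g'' = h then 1 else 0) * v g'' := by
    intro g'' hg''
    rw [mem_powerset] at hg''
    rw [← sum_mul]
    congr 1
    have re : ∑ g' ∈ h.powerset.filter (fun g' => g'' ⊆ g'),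
        (-1 : ℝ) ^ (g'.card - g''.card)
        = ∑ t ∈ (h \ g'').powerset, (-1 : ℝ) ^ t.card := by
      refine sum_nbij' (fun g' => g' \ g'') (fun t => g'' ∪ t) ?_ ?_ ?_ ?_ ?_
      · intro g' hg'
        rw [mem_filter, mem_powerset] at hg'
        rw [mem_powerset]
        exact sdiff_subset_sdiff hg'.1 (le_refl _)
      · intro t ht
        rw [mem_powerset] at ht
        rw [mem_filter, mem_powerset]
        exact ⟨union_subset hg'' (ht.trans sdiff_subset), subset_union_left⟩
      · intro g' hg'
        rw [mem_filter, mem_powerset] at hg'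
        exact union_sdiff_of_subset hg'.2
      · intro t ht
        rw [mem_powerset] at ht
        exact union_sdiff_cancel_left (disjoint_sdiff.mono_right ht)
      · intro g' hg'
        rw [mem_filter, mem_powerset] at hg'
        rw [card_sdiff_of_subset hg'.2]
    rw [re, sum_powerset_sign_real']
    by_cases hcase : g'' = h
    · subst hcase; simp
    · rw [if_neg hcase, if_neg]
      rw [sdiff_eq_empty_iff_subset]
      intro hsub
      exact hcase (subset_antisymm hg'' hsub)
  rw [sum_congr rfl inner]
  simp only [ite_mul, one_mul, zero_mul]
  rw [sum_ite_eq' h.powerset h v]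
  simp

lemma players_nonempty {g : Network n} (hg : g.Nonempty) : (players g).Nonempty := by
  obtain ⟨e, he⟩ := hg
  obtain ⟨i, hi⟩ := sym2_exists_mem e
  exact ⟨i, mem_players.2 ⟨e, he, hi⟩⟩

lemma weight_pos {w : Fin n → ℝ} (hw : ∀ k, 0 < w k) {g : Network n} (hg : g.Nonempty) :
    0 < ∑ j ∈ players g, w j :=
  sum_pos (fun j _ => hw j) (players_nonempty hg)

lemma dividend_empty {v : Network n → ℝ} (hv : componentAdditive v) :
    dividend v (∅ : Network n) = 0 := by
  rw [dividend]
  simp [value_empty hv]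

/-- The weighted Myerson value is component balanced. -/
lemma wMV_CB (w : Fin n → ℝ) (hw : ∀ k, 0 < w k) {v : Network n → ℝ}
    (hv : componentAdditive v) {g h : Network n} (hh : h ∈ components g) :
    ∑ i ∈ players h, wMV w v g i = v h := by
  classical
  simp only [wMV, sum_filter]
  rw [sum_comm]
  have hterm : ∀ g' ∈ g.powerset,
      (∑ i ∈ players h, if i ∈ players g'
        then (w i / ∑ j ∈ players g', w j) * dividend v g' else 0)
      = if g' ⊆ h ∧ g'.Nonempty then dividend v g' else 0 := by
    intro g' hg'
    rw [mem_powerset] at hg'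
    by_cases hne : g'.Nonempty
    · by_cases hsub : g' ⊆ h
      · rw [if_pos ⟨hsub, hne⟩, sum_ite_mem,
          inter_eq_right.2 (players_mono hsub), ← sum_mul, ← sum_div,
          div_self (ne_of_gt (weight_pos hw hne)), one_mul]
      · rw [if_neg (fun hcon => hsub hcon.1)]
        have hbne : (g' \ h).Nonempty := by
          obtain ⟨e, he, heh⟩ := not_subset.1 hsub
          exact ⟨e, mem_sdiff.2 ⟨he, heh⟩⟩
        by_cases hint : (g' ∩ h).Nonempty
        · rw [dividend_eq_zero hv hh hg' hint hbne]
          simp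
        · refine sum_eq_zero (fun i hi => ?_)
          rw [if_neg]
          intro hip
          obtain ⟨e, he, hie⟩ := mem_players.1 hip
          refine hint ⟨e, mem_inter.2 ⟨he, ?_⟩⟩
          exact mem_comp_of_endpoint hh (hg' he) hie hi
    · rw [not_nonempty_iff_eq_empty] at hne
      subst hne
      rw [if_neg (fun hcon : _ ∧ Finset.Nonempty _ => Finset.not_nonempty_empty hcon.2)]
      refine sum_eq_zero (fun i hi => ?_)
      rw [if_neg]
      simp [mem_players]
  rw [sum_congr rfl hterm, ← sum_filter]
  have hset : g.powerset.filter (fun g' => g' ⊆ h ∧ g'.Nonempty)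
      = h.powerset.filter (fun g' => g'.Nonempty) := by
    ext g'
    simp only [mem_filter, mem_powerset]
    constructor
    · rintro ⟨_, h2, h3⟩
      exact ⟨h2, h3⟩
    · rintro ⟨h1, h2⟩
      exact ⟨h1.trans (components_subset hh), h1, h2⟩
  rw [hset, sum_filter, ← sum_dividend_powerset v h]
  refine sum_congr rfl (fun g' hg' => ?_)
  by_cases hne : g'.Nonempty
  · rw [if_pos hne]
  · rw [not_nonempty_iff_eq_empty] at hne
    subst hne
    rw [if_neg (by simp), dividend_empty hv]

lemma wMV_zero (w : Fin n → ℝ) (v : Network n → ℝ) {g : Network n} {i : Fin n}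
    (hi : i ∉ players g) : wMV w v g i = 0 := by
  rw [wMV, filter_eq_empty_iff.2, sum_empty]
  intro g' hg'
  rw [mem_powerset] at hg'
  exact fun hip => hi (players_mono hg' hip)

/-- The key difference formula for `wMV` along a link. -/
lemma wMV_diff (w : Fin n → ℝ) (v : Network n → ℝ) {g : Network n} {i j : Fin n}
    (he : s(i, j) ∈ g) :
    w j * (wMV w v g i - wMV w v (g.erase s(i, j)) i) =
      w i * (wMV w v g j - wMV w v (g.erase s(i, j)) j) := by
  classical
  set e := s(i, j) with hedef
  have hdiff : ∀ k : Fin n, k ∈ e →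
      wMV w v g k - wMV w v (g.erase e) k
      = ∑ g' ∈ g.powerset.filter (fun g' => e ∈ g'),
          (w k / ∑ l ∈ players g', w l) * dividend v g' := by
    intro k hk
    have hBA : (g.erase e).powerset.filter (fun g' => k ∈ players g')
        ⊆ g.powerset.filter (fun g' => k ∈ players g') :=
      filter_subset_filter _ (powerset_mono.2 (erase_subset e g))
    have hsd : g.powerset.filter (fun g' => k ∈ players g')
        \ (g.erase e).powerset.filter (fun g' => k ∈ players g')
        = g.powerset.filter (fun g' => e ∈ g') := by
      ext g'
      simp only [mem_sdiff, mem_filter, mem_powerset]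
      constructor
      · rintro ⟨⟨h1, h2⟩, h3⟩
        refine ⟨h1, ?_⟩
        by_contra heg'
        exact h3 ⟨(subset_erase).2 ⟨h1, heg'⟩, h2⟩
      · rintro ⟨h1, h2⟩
        refine ⟨⟨h1, mem_players.2 ⟨e, h2, hk⟩⟩, ?_⟩
        rintro ⟨h3, _⟩
        exact notMem_erase e g (h3 h2)
    rw [wMV, wMV, ← sum_sdiff_eq_sub hBA, hsd]
  rw [hdiff i (Sym2.mem_mk_left i j), hdiff j (Sym2.mem_mk_right i j), mul_sum, mul_sum]
  refine sum_congr rfl (fun g' _ => ?_)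
  ring

lemma players_connected {g h : Network n} (hh : h ∈ components g) {x y : Fin n}
    (hx : x ∈ players h) (hy : y ∈ players h) : connectedIn g x y := by
  classical
  rw [components, mem_image] at hh
  obtain ⟨e0, he0, rfl⟩ := hh
  obtain ⟨e1, he1, hxe⟩ := mem_players.1 hx
  obtain ⟨e2, he2, hye⟩ := mem_players.1 hy
  rw [component, mem_filter] at he1 he2
  obtain ⟨he1g, a, ha, b, hb, hab⟩ := he1
  obtain ⟨he2g, a', ha', b', hb', hab'⟩ := he2
  exact ((((connectedIn_of_mem he1g hxe hb).trans (connectedIn_symm hab)).trans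
    (connectedIn_of_mem he0 ha ha')).trans hab').trans (connectedIn_of_mem he2g hb' hye)

/-- The weighted Myerson value is the unique component balanced allocation rule
satisfying Weighted Bargaining Power on component additive value functions. -/
theorem wMV_unique_CB_WBP (w : Fin n → ℝ) (hw : ∀ k, 0 < w k)
    (Y : Network n → (Network n → ℝ) → Fin n → ℝ)
    (hiso : ∀ (g : Network n) (v : Network n → ℝ), componentAdditive v →
      ∀ i ∉ players g, Y g v i = 0)
    (hCB : ∀ (g : Network n) (v : Network n → ℝ), componentAdditive v →
      ∀ h ∈ components g, ∑ i ∈ players h, Y g v i = v h)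
    (hWBP : ∀ (g : Network n) (v : Network n → ℝ), componentAdditive v →
      ∀ i j : Fin n, s(i, j) ∈ g →
        w j * (Y g v i - Y (g.erase s(i, j)) v i) =
          w i * (Y g v j - Y (g.erase s(i, j)) v j)) :
    ∀ (g : Network n) (v : Network n → ℝ), componentAdditive v →
      ∀ i : Fin n, Y g v i = wMV w v g i := by
  intro g v hv
  induction g using Finset.strongInduction with
  | _ g ih =>
  intro i
  have IH : ∀ e ∈ g, ∀ k, Y (g.erase e) v k = wMV w v (g.erase e) k :=
    fun e he k => ih (g.erase e) (erase_ssubset he) k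
  set D := fun k => Y g v k - wMV w v g k with hD
  have hlink : ∀ a b : Fin n, s(a, b) ∈ g → w b * D a = w a * D b := by
    intro a b hab
    have h1 := hWBP g v hv a b hab
    have h2 := wMV_diff w v hab
    rw [IH _ hab a, IH _ hab b] at h1
    simp only [hD]
    ring_nf
    ring_nf at h1 h2
    linarith
  have hpath : ∀ a b : Fin n, connectedIn g a b → w b * D a = w a * D b := by
    intro a b hab
    induction hab with
    | refl => ring
    | tail hxz hzy ihab =>
      rename_i z y
      have hstep := hlink z y hzy
      have := mul_left_cancel₀ (ne_of_gt (hw z))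
        (show w z * (w y * D a) = w z * (w a * D y) by
          linear_combination w y * ihab + w a * hstep)
      exact this
  have hcompzero : ∀ h ∈ components g, ∀ x ∈ players h, D x = 0 := by
    intro h hh x hx
    have hsum : ∑ y ∈ players h, D y = 0 := by
      simp only [hD]
      rw [sum_sub_distrib, hCB g v hv h hh, wMV_CB w hw hv hh, sub_self]
    have hconst : ∀ y ∈ players h, w y * D x = w x * D y :=
      fun y hy => hpath x y (players_connected hh hx hy)
    have : (∑ y ∈ players h, w y) * D x = w x * ∑ y ∈ players h, D y := by
      rw [sum_mul, mul_sum]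
      exact sum_congr rfl hconst
    rw [hsum, mul_zero] at this
    have hpos : 0 < ∑ y ∈ players h, w y := sum_pos (fun y _ => hw y) ⟨x, hx⟩
    have := mul_eq_zero.1 this
    rcases this with h0 | h0
    · exact absurd h0 (ne_of_gt hpos)
    · exact h0
  by_cases hi : i ∈ players g
  · obtain ⟨e, he, hie⟩ := mem_players.1 hi
    have hh : component g e ∈ components g := mem_image_of_mem _ he
    have hip : i ∈ players (component g e) := edge_players_in (mem_component_self he) hie
    have := hcompzero _ hh i hip
    simpa [hD, sub_eq_zero] using this
  · rw [hiso g v hv i hi, wMV_zero w v hi]
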